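/- Let D and D' be unconditionally equivalent DAGs on the same finite vertex set V, and suppose both are maximal in their unconditional equivalence class, i.e., no DAG obtained from D (respectively D') by adding a single directed edge is unconditionally equivalent to it. Then D and D' have the same skeleton: for all distinct u, v, the nodes u and v are adjacent in D if and only if they are adjacent in D'. -/

import Mathlib

namespace UEC

variable {V : Type*}

/-- A directed graph is a DAG if it has no directed cycles. -/
def IsDAG (D : Digraph V) : Prop := ∀ v : V, ¬ Relation.TransGen D.Adj v v

/-- `an D v` : the set of ancestors of `v` (nodes with a directed path to `v`),
including `v` itself. -/
def an (D : Digraph V) (v : V) : Set V := {u | Relation.ReflTransGen D.Adj u v}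

/-- `de D v` : the set of descendants of `v` (nodes reachable by a directed path
from `v`), including `v` itself. -/
def de (D : Digraph V) (v : V) : Set V := {u | Relation.ReflTransGen D.Adj v u}

/-- `pa D v` : the set of parents of `v`. -/
def pa (D : Digraph V) (v : V) : Set V := {u | D.Adj u v}

/-- A source node is a node with no parents. -/
def IsSource (D : Digraph V) (v : V) : Prop := pa D v = ∅

/-- `sources D` : the set of source nodes of `D` (denoted `ma_D(V)` in the paper). -/
def sources (D : Digraph V) : Set V := {v | IsSource D v}

/-- Ancestors of a set of nodes. -/
def anSet (D : Digraph V) (A : Set V) : Set V := ⋃ a ∈ A, an D a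

/-- `maSet D A = {u ∈ an_D(A) : an_D(u) = {u}}`, the source nodes that are
ancestors of `A`. -/
def maSet (D : Digraph V) (A : Set V) : Set V :=
  {u | u ∈ anSet D A ∧ an D u = {u}}

/-- Two nodes are adjacent in a digraph if there is an edge between them in
either direction. -/
def Adjacent (D : Digraph V) (v w : V) : Prop := D.Adj v w ∨ D.Adj w v

/-- A trek in `D` is a path over distinct vertices (given as the list of its
vertices, consecutive ones being adjacent) containing no collider
`p i → p (i+1) ← p (i+2)` as a subpath. -/
def IsTrekList (D : Digraph V) (p : List V) : Prop :=
  p.Nodup ∧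
    (∀ i : ℕ, (h : i + 1 < p.length) →
      (D.Adj (p.get ⟨i, by omega⟩) (p.get ⟨i + 1, h⟩) ∨
        D.Adj (p.get ⟨i + 1, h⟩) (p.get ⟨i, by omega⟩))) ∧
    (∀ i : ℕ, (h : i + 2 < p.length) →
      ¬(D.Adj (p.get ⟨i, by omega⟩) (p.get ⟨i + 1, by omega⟩) ∧
        D.Adj (p.get ⟨i + 2, h⟩) (p.get ⟨i + 1, by omega⟩)))

/-- There is a trek between `v` and `w` in `D`. -/
def HasTrek (D : Digraph V) (v w : V) : Prop :=
  ∃ p : List V, IsTrekList D p ∧ p.head? = some v ∧ p.getLast? = some w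

/-- Adjacency in the unconditional dependence graph `U^D` : two distinct nodes
are adjacent iff there is a trek between them. -/
def UAdj (D : Digraph V) (v w : V) : Prop :=
  v ≠ w ∧ (HasTrek D v w ∨ HasTrek D w v)

/-- Two digraphs on the same vertex set are unconditionally equivalent if for
all distinct nodes there is a trek between them in one iff there is one in the
other. -/
def UncondEquiv (D D' : Digraph V) : Prop :=
  ∀ v w : V, v ≠ w → (HasTrek D v w ↔ HasTrek D' v w)

/-- The digraph obtained by adding the edge `v → w`. -/
def addEdge (D : Digraph V) (v w : V) : Digraph V :=
  ⟨fun a b => D.Adj a b ∨ (a = v ∧ b = w)⟩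

/-- The digraph obtained by deleting the edge `v → w`. -/
def delEdge (D : Digraph V) (v w : V) : Digraph V :=
  ⟨fun a b => D.Adj a b ∧ ¬(a = v ∧ b = w)⟩

/-- The digraph obtained by replacing the edge `v → w` with `w → v`. -/
def revEdge (D : Digraph V) (v w : V) : Digraph V :=
  ⟨fun a b => (D.Adj a b ∧ ¬(a = v ∧ b = w)) ∨ (a = w ∧ b = v)⟩

/-- The ordered pair `(v, w)` is partially weakly covered in `D`. -/
def PartiallyWeaklyCovered (D : Digraph V) (v w : V) : Prop :=
  maSet D {v} ⊆ maSet D {w} ∧ v ∉ an D w ∧ w ∉ an D v ∧ pa D v ≠ ∅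

/-- The ordered pair `(v, w)` is implied by transitivity in `D`, i.e.
`v ∈ an_D(w) \ ({w} ∪ pa_D(w))`. -/
def ImpliedByTransitivity (D : Digraph V) (v w : V) : Prop :=
  v ∈ an D w \ ({w} ∪ pa D w)

/-- The edge `v → w` is weakly covered in `D`. -/
def WeaklyCovered (D : Digraph V) (v w : V) : Prop :=
  maSet D (pa D v) = maSet D (pa D w \ {v}) ∧ v ∉ anSet D (pa D w \ {v})

/-- A DAG is maximal in its unconditional equivalence class if no digraph
obtained from it by adding a single directed edge is a DAG unconditionally
equivalent to it. -/
def MaximalInUEC (D : Digraph V) : Prop :=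
  ∀ a b : V, ¬ D.Adj a b →
    ¬ (IsDAG (addEdge D a b) ∧ UncondEquiv D (addEdge D a b))

/-!
In a DAG, two nodes are joined by a trek iff they have a common ancestor, and a trek starting
at a source is just a directed path. So adding an edge `a → b` with no path `b ⇝ a` keeps the
unconditional equivalence class as soon as every source above `a` is also above `b`: a new
common ancestor of `x` and `y` can always be replaced by a source above it.

Let `u → v` in `D` with `u`, `v` non-adjacent in `D'`. If `v ⇝ u` in `D'`, the edge `v → u`
can be added to `D'`. Otherwise every source `m ⇝ u` of `D'` reaches `v` in `D'`: the trek
`m – u` transfers to `D`, extends along `u → v`, and the trek `m – v` transfers back to `D'`.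
Then `u → v` can be added to `D'`. Either way `D'` was not maximal.
-/

open Relation

section Treks

variable {D : Digraph V}

theorem isTrekList_singleton (a : V) : IsTrekList D [a] :=
  ⟨List.nodup_singleton a, fun _ h => by simp at h, fun _ h => by simp at h⟩

theorem isTrekList_cons_cons {a b : V} {p : List V} :
    IsTrekList D (a :: b :: p) ↔
      a ∉ b :: p ∧ (D.Adj a b ∨ D.Adj b a) ∧
        (∀ c ∈ p.head?, ¬(D.Adj a b ∧ D.Adj c b)) ∧ IsTrekList D (b :: p) := by
  constructor
  · rintro ⟨hnd, hedge, hcol⟩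
    refine ⟨(List.nodup_cons.1 hnd).1, hedge 0 (by simp), ?_, hnd.of_cons,
      fun i hi => hedge (i + 1) (by simpa using hi), fun i hi => hcol (i + 1) (by simpa using hi)⟩
    cases p with
    | nil => simp
    | cons c p => simpa using hcol 0 (by simp)
  · rintro ⟨ha, hab, hc, hnd, hedge, hcol⟩
    refine ⟨List.nodup_cons.2 ⟨ha, hnd⟩, fun i hi => ?_, fun i hi => ?_⟩
    · cases i with
      | zero => exact hab
      | succ i => exact hedge i (by simpa using hi)
    · cases i with
      | zero =>
        cases p with
        | nil => simp at hi
        | cons c p => exact hc c rfl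
      | succ i => exact hcol i (by simpa using hi)

theorem IsTrekList.tail {a : V} {p : List V} (h : IsTrekList D (a :: p)) : IsTrekList D p := by
  cases p with
  | nil => exact ⟨List.nodup_nil, fun _ h => by simp at h, fun _ h => by simp at h⟩
  | cons b p => exact (isTrekList_cons_cons.1 h).2.2.2

theorem IsTrekList.of_append_right {p q : List V} (h : IsTrekList D (p ++ q)) :
    IsTrekList D q := by
  induction p with
  | nil => exact h
  | cons a p ih => exact ih h.tail

theorem IsTrekList.reverse {p : List V} (h : IsTrekList D p) : IsTrekList D p.reverse := by
  obtain ⟨hnd, hedge, hcol⟩ := h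
  refine ⟨List.nodup_reverse.2 hnd, fun i hi => ?_, fun i hi => ?_⟩
  · simp only [List.length_reverse] at hi
    have := hedge (p.length - 2 - i) (by omega)
    simp only [List.get_eq_getElem, List.getElem_reverse,
      show p.length - 1 - i = p.length - 2 - i + 1 by omega,
      show p.length - 1 - (i + 1) = p.length - 2 - i by omega] at this ⊢
    exact this.symm
  · simp only [List.length_reverse] at hi
    have := hcol (p.length - 3 - i) (by omega)
    simp only [List.get_eq_getElem, List.getElem_reverse,
      show p.length - 1 - i = p.length - 3 - i + 2 by omega,
      show p.length - 1 - (i + 1) = p.length - 3 - i + 1 by omega,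
      show p.length - 1 - (i + 2) = p.length - 3 - i by omega] at this ⊢
    exact fun h => this h.symm

theorem IsTrekList.cons_of_adj {a b : V} {p : List V} (h : IsTrekList D (a :: p))
    (hab : D.Adj a b) (hba : ¬D.Adj b a) (hb : b ∉ a :: p) : IsTrekList D (b :: a :: p) :=
  isTrekList_cons_cons.2 ⟨hb, Or.inr hab, fun _ _ hcol => hba hcol.1, h⟩

theorem IsTrekList.reflTransGen_of_adj {a b y : V} {p : List V}
    (h : IsTrekList D (a :: b :: p)) (hab : D.Adj a b) (hy : (b :: p).getLast? = some y) :
    ReflTransGen D.Adj a y := by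
  induction p generalizing a b with
  | nil =>
    obtain rfl : b = y := by simpa using hy
    exact .single hab
  | cons c p ih =>
    obtain ⟨-, -, hcol, htail⟩ := isTrekList_cons_cons.1 h
    have hbc : D.Adj b c := (isTrekList_cons_cons.1 htail).2.1.resolve_right (hcol c rfl ⟨hab, ·⟩)
    exact ReflTransGen.head hab (ih htail hbc (by simpa using hy))

theorem IsTrekList.exists_common_ancestor {x y : V} {p : List V} (h : IsTrekList D (x :: p))
    (hy : (x :: p).getLast? = some y) :
    ∃ t, ReflTransGen D.Adj t x ∧ ReflTransGen D.Adj t y := by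
  induction p generalizing x with
  | nil =>
    obtain rfl : x = y := by simpa using hy
    exact ⟨x, .refl, .refl⟩
  | cons b p ih =>
    rcases (isTrekList_cons_cons.1 h).2.1 with hxb | hbx
    · exact ⟨x, .refl, h.reflTransGen_of_adj hxb (by simpa using hy)⟩
    · obtain ⟨t, htb, hty⟩ := ih h.tail (by simpa using hy)
      exact ⟨t, htb.tail hbx, hty⟩

theorem HasTrek.refl (v : V) : HasTrek D v v :=
  ⟨[v], isTrekList_singleton v, rfl, rfl⟩

theorem HasTrek.symm {x y : V} (h : HasTrek D x y) : HasTrek D y x := by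
  obtain ⟨p, hp, hx, hy⟩ := h
  exact ⟨p.reverse, hp.reverse, by simpa using hy, by simpa using hx⟩

/-- If `b` already lies on the trek, the trek is cut at `b` instead of extended; otherwise
`b` is prepended, and the asymmetry rules out a collider at `a`. -/
theorem HasTrek.of_parent {a b y : V} (h : HasTrek D a y) (hab : D.Adj a b)
    (hba : ¬D.Adj b a) : HasTrek D b y := by
  obtain ⟨_, hp, ha, hy⟩ := h
  obtain ⟨p, rfl⟩ := List.head?_eq_some_iff.1 ha
  by_cases hb : b ∈ a :: p
  · obtain ⟨s, q, hsq⟩ := List.append_of_mem hb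
    rw [hsq] at hp hy
    exact ⟨b :: q, hp.of_append_right, rfl, by simpa using hy⟩
  · exact ⟨b :: a :: p, hp.cons_of_adj hab hba hb, rfl, by simpa using hy⟩

end Treks

section Acyclic

variable {D : Digraph V}

theorem IsDAG.asymm (hD : IsDAG D) {a b : V} (hab : D.Adj a b) : ¬D.Adj b a :=
  fun hba => hD a (.head hab (.single hba))

theorem IsDAG.not_reflTransGen_of_reflTransGen (hD : IsDAG D) {a b : V}
    (hab : ReflTransGen D.Adj a b) (hne : a ≠ b) : ¬ReflTransGen D.Adj b a := fun hba =>
  hD a (((reflTransGen_iff_eq_or_transGen.1 hab).resolve_left hne.symm).trans_left hba)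

theorem hasTrek_of_common_ancestor (hD : IsDAG D) {t x y : V} (hx : ReflTransGen D.Adj t x)
    (hy : ReflTransGen D.Adj t y) : HasTrek D x y := by
  have hty : HasTrek D t y := by
    refine HasTrek.symm ?_
    induction hy with
    | refl => exact .refl t
    | tail _ hbc ih => exact ih.of_parent hbc (hD.asymm hbc)
  induction hx with
  | refl => exact hty
  | tail _ hbc ih => exact ih.of_parent hbc (hD.asymm hbc)

theorem hasTrek_iff (hD : IsDAG D) {x y : V} :
    HasTrek D x y ↔ ∃ t, ReflTransGen D.Adj t x ∧ ReflTransGen D.Adj t y := by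
  constructor
  · rintro ⟨_, hp, hx, hy⟩
    obtain ⟨p, rfl⟩ := List.head?_eq_some_iff.1 hx
    exact hp.exists_common_ancestor hy
  · rintro ⟨t, hx, hy⟩
    exact hasTrek_of_common_ancestor hD hx hy

end Acyclic

section AddEdge

variable {D : Digraph V}

theorem reflTransGen_addEdge {a b x y : V} (h : ReflTransGen (addEdge D a b).Adj x y) :
    ReflTransGen D.Adj x y ∨ (ReflTransGen D.Adj x a ∧ ReflTransGen D.Adj b y) := by
  induction h with
  | refl => exact .inl .refl
  | tail _ hcy ih =>
    rcases hcy with hcy | ⟨rfl, rfl⟩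
    · exact ih.imp (·.tail hcy) (.imp_right (·.tail hcy))
    · exact .inr ⟨ih.elim id (·.1), .refl⟩

theorem isDAG_addEdge (hD : IsDAG D) {a b : V} (hba : ¬ReflTransGen D.Adj b a) :
    IsDAG (addEdge D a b) := by
  intro z hz
  obtain ⟨c, hzc, hcz⟩ := TransGen.head'_iff.1 hz
  rcases hzc with hzc | ⟨rfl, rfl⟩
  · rcases reflTransGen_addEdge hcz with hcz | ⟨hca, hbz⟩
    · exact hD z (.head' hzc hcz)
    · exact hba (hbz.trans (.head hzc hca))
  · exact hba ((reflTransGen_addEdge hcz).elim id (·.1))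

theorem IsSource.eq_of_reflTransGen {m t : V} (hm : IsSource D m)
    (h : ReflTransGen D.Adj t m) : t = m := by
  rcases h.cases_tail with rfl | ⟨c, -, hcm⟩
  · rfl
  · exact absurd hcm (Set.eq_empty_iff_forall_notMem.1 hm c)

theorem hasTrek_source_iff (hD : IsDAG D) {m x : V} (hm : IsSource D m) :
    HasTrek D m x ↔ ReflTransGen D.Adj m x := by
  rw [hasTrek_iff hD]
  constructor
  · rintro ⟨t, htm, htx⟩
    exact hm.eq_of_reflTransGen htm ▸ htx
  · exact fun hmx => ⟨m, .refl, hmx⟩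

theorem exists_source_reflTransGen [Finite V] (hD : IsDAG D) (v : V) :
    ∃ m, IsSource D m ∧ ReflTransGen D.Adj m v := by
  have : IsTrans V (TransGen D.Adj) := ⟨fun _ _ _ => TransGen.trans⟩
  have : Std.Irrefl (TransGen D.Adj) := ⟨hD⟩
  induction v using (Finite.wellFounded_of_trans_of_irrefl (TransGen D.Adj)).induction with
  | _ v ih =>
    by_cases hv : IsSource D v
    · exact ⟨v, hv, .refl⟩
    · obtain ⟨u, huv⟩ := Set.nonempty_iff_ne_empty.2 hv
      obtain ⟨m, hm, hmu⟩ := ih u (.single huv)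
      exact ⟨m, hm, hmu.tail huv⟩

theorem uncondEquiv_addEdge [Finite V] (hD : IsDAG D) {a b : V}
    (hba : ¬ReflTransGen D.Adj b a)
    (hsrc : ∀ m, IsSource D m → ReflTransGen D.Adj m a → ReflTransGen D.Adj m b) :
    UncondEquiv D (addEdge D a b) := by
  intro x y _
  rw [hasTrek_iff hD, hasTrek_iff (isDAG_addEdge hD hba)]
  have hmono : ∀ {u w}, ReflTransGen D.Adj u w → ReflTransGen (addEdge D a b).Adj u w :=
    fun h => ReflTransGen.mono (fun _ _ => Or.inl) _ _ h
  constructor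
  · rintro ⟨t, hx, hy⟩
    exact ⟨t, hmono hx, hmono hy⟩
  · rintro ⟨t, hx, hy⟩
    obtain ⟨m, hm, hmt⟩ := exists_source_reflTransGen hD t
    have hlift : ∀ z, ReflTransGen (addEdge D a b).Adj t z → ReflTransGen D.Adj m z := by
      intro z htz
      rcases reflTransGen_addEdge htz with htz | ⟨hta, hbz⟩
      · exact hmt.trans htz
      · exact (hsrc m hm (hmt.trans hta)).trans hbz
    exact ⟨m, hlift x hx, hlift y hy⟩

theorem MaximalInUEC.adj_of_sources [Finite V] (hmax : MaximalInUEC D) (hD : IsDAG D)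
    {a b : V} (hba : ¬ReflTransGen D.Adj b a)
    (hsrc : ∀ m, IsSource D m → ReflTransGen D.Adj m a → ReflTransGen D.Adj m b) :
    D.Adj a b := by
  by_contra hab
  exact hmax a b hab ⟨isDAG_addEdge hD hba, uncondEquiv_addEdge hD hba hsrc⟩

end AddEdge

theorem UncondEquiv.symm {D D' : Digraph V} (h : UncondEquiv D D') : UncondEquiv D' D :=
  fun v w hvw => (h v w hvw).symm

theorem Adjacent.symm {D : Digraph V} {u v : V} (h : Adjacent D u v) : Adjacent D v u :=
  Or.symm h

theorem adjacent_of_adj [Finite V] {D D' : Digraph V} (hD : IsDAG D) (hD' : IsDAG D')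
    (h : UncondEquiv D D') (hmax' : MaximalInUEC D') {u v : V} (huv : D.Adj u v) :
    Adjacent D' u v := by
  have hne : u ≠ v := fun huv' => hD u (.single (huv' ▸ huv))
  by_cases hvu : ReflTransGen D'.Adj v u
  · exact .inr (hmax'.adj_of_sources hD' (hD'.not_reflTransGen_of_reflTransGen hvu hne.symm)
      fun m _ hmv => hmv.trans hvu)
  refine .inl (hmax'.adj_of_sources hD' hvu fun m hm hmu => ?_)
  by_cases hmv : m = v
  · exact hmv ▸ .refl
  have hanc : ∃ t, ReflTransGen D.Adj t m ∧ ReflTransGen D.Adj t u := by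
    by_cases hmu' : m = u
    · exact ⟨u, hmu' ▸ .refl, .refl⟩
    · exact (hasTrek_iff hD).1 ((h m u hmu').2 ((hasTrek_source_iff hD' hm).2 hmu))
  obtain ⟨t, htm, htu⟩ := hanc
  exact (hasTrek_source_iff hD' hm).1 ((h m v hmv).1 ((hasTrek_iff hD).2 ⟨t, htm, htu.tail huv⟩))

theorem adjacent_of_adjacent [Finite V] {D D' : Digraph V} (hD : IsDAG D) (hD' : IsDAG D')
    (h : UncondEquiv D D') (hmax' : MaximalInUEC D') {u v : V} (huv : Adjacent D u v) :
    Adjacent D' u v :=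
  huv.elim (adjacent_of_adj hD hD' h hmax') fun hvu => (adjacent_of_adj hD hD' h hmax' hvu).symm

/-- Two unconditionally equivalent DAGs on the same finite
vertex set that are both maximal in their unconditional equivalence class have
the same skeleton. -/
theorem maximal_same_skeleton [Fintype V] (D D' : Digraph V) (hD : IsDAG D)
    (hD' : IsDAG D') (h : UncondEquiv D D') (hmax : MaximalInUEC D)
    (hmax' : MaximalInUEC D') :
    ∀ u v : V, u ≠ v → (Adjacent D u v ↔ Adjacent D' u v) := fun _ _ _ =>
  ⟨adjacent_of_adjacent hD hD' h hmax', adjacent_of_adjacent hD' hD h.symm hmax⟩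

end UEC
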